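/- Equip Bool with the discrete topology, (ℕ →₀ ℤ) → Bool with the product topology, and ℕ → Bool with the product topology. Then: (a) the set of all χ : (ℕ →₀ ℤ) → Bool such that some additive subgroup H of ℕ →₀ ℤ has underlying set {x | χ x = true} and the quotient group (ℕ →₀ ℤ) ⧸ H is divisible, is a Gδ subset of (ℕ →₀ ℤ) → Bool; and (b) there exists a continuous map f : (ℕ → Bool) → ((ℕ →₀ ℤ) → Bool) such that for every α : ℕ → Bool the set {x | f α x = true} is the underlying set of an additive subgroup J_α of ℕ →₀ ℤ, and the quotient (ℕ →₀ ℤ) ⧸ J_α is divisible if and only if the set {n : ℕ | α n = true} is infinite. (Since the set of sequences with infinitely many values true is the canonical Π⁰₂-complete subset of the Cantor space, (a) and (b) together say that divisibility is Π⁰₂-complete in this coding.) -/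

import Mathlib

/-- An additive abelian group is divisible if every element is divisible by every
positive natural number. -/
def IsDivisibleGroup (A : Type*) [AddCommGroup A] : Prop :=
  ∀ a : A, ∀ n : ℕ, 1 ≤ n → ∃ b : A, n • b = a

/-!
(a) That `{x | χ x = true}` is a subgroup is an intersection of clopen conditions on `χ`, each
reading finitely many values of `χ`; divisibility of the quotient by it says that for all `x` and
`n ≥ 1` some `n • b - x` lies in the subgroup, a countable intersection of unions of clopen sets.

(b) Send `α` to the kernel of `ℕ →₀ ℤ → ℚ`, `single n 1 ↦ 1 / (c n)!`, where `c n` counts the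
`k < n` with `α k = true`. Whether `x` lies in this kernel depends only on `α` below the support
of `x`, so the reduction is continuous. The quotient is the subgroup of `ℚ` generated by the
`1 / (c n)!`: if `α` has infinitely many `true` values, `c` is unbounded and this is all of `ℚ`;
otherwise `c ≤ M` and the subgroup lies in `(1 / M!) ℤ`, where `1` is not divisible by `2 * M!`.
-/

open scoped Nat

section Divisible

variable {G A : Type*} [AddCommGroup G] [AddCommGroup A]

theorem isDivisibleGroup_quotient_iff (H : AddSubgroup G) :
    IsDivisibleGroup (G ⧸ H) ↔ ∀ x : G, ∀ n : ℕ, 1 ≤ n → ∃ b : G, n • b - x ∈ H := by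
  refine ⟨fun h x n hn => ?_, fun h q n hn => ?_⟩
  · obtain ⟨b, hb⟩ := h x n hn
    obtain ⟨b, rfl⟩ := QuotientAddGroup.mk_surjective b
    exact ⟨b, QuotientAddGroup.eq_iff_sub_mem.mp hb⟩
  · obtain ⟨x, rfl⟩ := QuotientAddGroup.mk_surjective q
    obtain ⟨b, hb⟩ := h x n hn
    exact ⟨b, QuotientAddGroup.eq_iff_sub_mem.mpr hb⟩

theorem isDivisibleGroup_quotient_ker_iff (f : G →+ A) :
    IsDivisibleGroup (G ⧸ f.ker) ↔ ∀ x : G, ∀ n : ℕ, 1 ≤ n → ∃ b : G, n • f b = f x := by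
  simp only [isDivisibleGroup_quotient_iff, AddMonoidHom.mem_ker, map_sub, map_nsmul, sub_eq_zero]

theorem isDivisibleGroup_quotient_ker_of_surjective {f : G →+ A} (hA : IsDivisibleGroup A)
    (hf : Function.Surjective f) : IsDivisibleGroup (G ⧸ f.ker) := by
  refine (isDivisibleGroup_quotient_ker_iff f).mpr fun x n hn => ?_
  obtain ⟨a, ha⟩ := hA (f x) n hn
  obtain ⟨b, rfl⟩ := hf a
  exact ⟨b, ha⟩

end Divisible

section DependsOn

variable {ι Y : Type*} {X : ι → Type*} [∀ i, TopologicalSpace (X i)] [∀ i, DiscreteTopology (X i)]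
  {s : Set ι}

theorem DependsOn.continuous [TopologicalSpace Y] {f : (Π i, X i) → Y} (hf : DependsOn f s)
    (hs : s.Finite) : Continuous f := by
  refine IsLocallyConstant.continuous <| (IsLocallyConstant.iff_eventually_eq f).mpr fun x => ?_
  have hnear : ∀ i ∈ s, ∀ᶠ y in nhds x, y i = x i := fun i _ =>
    (continuous_apply i).continuousAt ((isOpen_discrete {x i}).mem_nhds rfl)
  filter_upwards [hs.eventually_all.mpr hnear] with y hy using hf hy

theorem DependsOn.isOpen_setOf {p : (Π i, X i) → Prop} (hp : DependsOn p s) (hs : s.Finite) :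
    IsOpen {x | p x} :=
  isOpen_iff_continuous_mem.mpr (hp.continuous hs)

end DependsOn

theorem isOpen_setOf_apply_eq_true {G : Type*} (x : G) : IsOpen {χ : G → Bool | χ x = true} :=
  DependsOn.isOpen_setOf (s := {x}) (fun χ ψ h => by rw [h x rfl]) (Set.finite_singleton x)

theorem exists_addSubgroup_coe_eq_iff {G : Type*} [AddGroup G] {s : Set G} :
    (∃ H : AddSubgroup G, (H : Set G) = s) ↔ 0 ∈ s ∧ ∀ x y, x ∈ s → y ∈ s → x - y ∈ s := by
  refine ⟨?_, fun ⟨h0, hsub⟩ => ⟨AddSubgroup.ofSub s ⟨0, h0⟩ ?_, rfl⟩⟩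
  · rintro ⟨H, rfl⟩
    exact ⟨H.zero_mem, fun x y hx hy => H.sub_mem hx hy⟩
  · exact fun x hx y hy => by simpa only [sub_eq_add_neg] using hsub x y hx hy

theorem setOf_isDivisibleGroup_quotient_eq {G : Type*} [AddCommGroup G] :
    {χ : G → Bool | ∃ H : AddSubgroup G, (H : Set G) = {x | χ x = true} ∧
        IsDivisibleGroup (G ⧸ H)} =
      {χ | χ 0 = true} ∩
        (⋂ p : G × G, {χ | χ p.1 = true → χ p.2 = true → χ (p.1 - p.2) = true}) ∩
        ⋂ q : G × ℕ, {χ | 1 ≤ q.2 → ∃ b, χ (q.2 • b - q.1) = true} := by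
  ext χ
  simp only [Set.mem_inter_iff, Set.mem_iInter, Set.mem_ofPred_eq, Prod.forall]
  constructor
  · rintro ⟨H, hH, hdiv⟩
    rw [isDivisibleGroup_quotient_iff] at hdiv
    simp only [← SetLike.mem_coe, hH, Set.mem_ofPred_eq] at hdiv
    simpa using And.intro (exists_addSubgroup_coe_eq_iff.mp ⟨H, hH⟩) hdiv
  · rintro ⟨hcode, hdiv⟩
    obtain ⟨H, hH⟩ :=
      (exists_addSubgroup_coe_eq_iff (s := {x | χ x = true})).mpr (by simpa using hcode)
    refine ⟨H, hH, (isDivisibleGroup_quotient_iff H).mpr ?_⟩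
    simpa only [← SetLike.mem_coe, hH, Set.mem_ofPred_eq] using hdiv

theorem isGδ_setOf_isDivisibleGroup_quotient {G : Type*} [AddCommGroup G] [Countable G] :
    IsGδ {χ : G → Bool | ∃ H : AddSubgroup G, (H : Set G) = {x | χ x = true} ∧
        IsDivisibleGroup (G ⧸ H)} := by
  rw [setOf_isDivisibleGroup_quotient_eq]
  have hsub (x y : G) :
      IsOpen {χ : G → Bool | χ x = true → χ y = true → χ (x - y) = true} :=
    DependsOn.isOpen_setOf (s := {x, y, x - y}) (fun χ ψ h => by simp [h]) (by simp)
  have hdiv (x : G) (n : ℕ) : IsOpen {χ : G → Bool | 1 ≤ n → ∃ b, χ (n • b - x) = true} := by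
    rcases Nat.eq_zero_or_pos n with rfl | hn
    · simp
    · simpa [Nat.one_le_iff_ne_zero.mpr hn.ne', Set.ofPred_exists] using
        isOpen_iUnion fun b => isOpen_setOf_apply_eq_true (n • b - x)
  exact ((isOpen_setOf_apply_eq_true 0).isGδ.inter
    (.iInter fun p : G × G => (hsub p.1 p.2).isGδ)).inter
      (.iInter fun q : G × ℕ => (hdiv q.1 q.2).isGδ)

theorem isDivisibleGroup_rat : IsDivisibleGroup ℚ := fun q n hn =>
  ⟨q / n, by rw [nsmul_eq_mul, mul_div_cancel₀ _ (by positivity)]⟩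

theorem two_mul_nsmul_ne_one_of_mem_zmultiples_inv {D : ℕ} (hD : D ≠ 0) {q : ℚ}
    (hq : q ∈ AddSubgroup.zmultiples (D : ℚ)⁻¹) : (2 * D) • q ≠ 1 := by
  obtain ⟨m, rfl⟩ := hq
  have : (2 * m : ℚ) ≠ 1 := by exact_mod_cast (by omega : 2 * m ≠ 1)
  simpa [zsmul_eq_mul, nsmul_eq_mul, hD, mul_assoc, mul_left_comm, mul_comm] using this

section FactorialHom

variable {ι : Type*}

noncomputable def factorialHom (a : ι → ℕ) : (ι →₀ ℤ) →+ ℚ :=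
  Finsupp.liftAddHom fun i => zmultiplesHom ℚ ((a i)! : ℚ)⁻¹

theorem factorialHom_apply (a : ι → ℕ) (x : ι →₀ ℤ) :
    factorialHom a x = ∑ i ∈ x.support, (x i : ℚ) / (a i)! := by
  simp [factorialHom, Finsupp.liftAddHom_apply, Finsupp.sum, zsmul_eq_mul, div_eq_mul_inv]

theorem factorialHom_single (a : ι → ℕ) (i : ι) (z : ℤ) :
    factorialHom a (Finsupp.single i z) = z / (a i)! := by
  simp [factorialHom, zsmul_eq_mul, div_eq_mul_inv]

theorem factorialHom_congr {a b : ι → ℕ} {x : ι →₀ ℤ} (h : ∀ i ∈ x.support, a i = b i) :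
    factorialHom a x = factorialHom b x := by
  simp only [factorialHom_apply]
  exact Finset.sum_congr rfl fun i hi => by rw [h i hi]

theorem factorialHom_surjective {a : ι → ℕ} (ha : ∀ m, ∃ i, m ≤ a i) :
    Function.Surjective (factorialHom a) := by
  intro q
  obtain ⟨i, hi⟩ := ha q.den
  have hdvd : q.den ∣ (a i)! := Nat.dvd_factorial q.den_pos hi
  refine ⟨Finsupp.single i (q.num * ((a i)! / q.den : ℕ)), ?_⟩
  rw [factorialHom_single, Int.cast_mul, Int.cast_natCast, Nat.cast_div hdvd (by positivity)]
  field_simp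
  rw [mul_comm, ← div_eq_iff (by positivity), Rat.num_div_den]

theorem factorialHom_mem_zmultiples {a : ι → ℕ} {M : ℕ} (ha : ∀ i, a i ≤ M) (x : ι →₀ ℤ) :
    factorialHom a x ∈ AddSubgroup.zmultiples ((M ! : ℚ)⁻¹) := by
  induction x using Finsupp.induction_linear with
  | zero => simp
  | add x y hx hy => simpa using add_mem hx hy
  | single i z =>
    refine ⟨z * (M ! / (a i)! : ℕ), ?_⟩
    simp only [factorialHom_single, zsmul_eq_mul, Int.cast_mul, Int.cast_natCast]
    rw [Nat.cast_div (Nat.factorial_dvd_factorial (ha i)) (by positivity)]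
    field_simp

theorem not_isDivisibleGroup_quotient_ker_factorialHom [Nonempty ι] {a : ι → ℕ} {M : ℕ}
    (ha : ∀ i, a i ≤ M) : ¬ IsDivisibleGroup ((ι →₀ ℤ) ⧸ (factorialHom a).ker) := by
  intro hdiv
  obtain ⟨i⟩ := ‹Nonempty ι›
  obtain ⟨b, hb⟩ := (isDivisibleGroup_quotient_ker_iff _).mp hdiv (Finsupp.single i (a i)!)
    (2 * M !) (Nat.one_le_iff_ne_zero.mpr (by positivity))
  rw [factorialHom_single, Int.cast_natCast, div_self (by positivity)] at hb
  exact two_mul_nsmul_ne_one_of_mem_zmultiples_inv M.factorial_ne_zero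
    (factorialHom_mem_zmultiples ha b) hb

end FactorialHom

theorem dependsOn_count (n : ℕ) :
    DependsOn (fun α : ℕ → Bool => Nat.count (α · = true) n) (Set.Iio n) := fun α β h => by
  simp only [Nat.count_eq_card_filter_range]
  exact congrArg Finset.card <| Finset.filter_congr fun k hk => by
    rw [h k (Finset.mem_range.mp hk)]

theorem isDivisibleGroup_quotient_ker_factorialHom_count_iff (α : ℕ → Bool) :
    IsDivisibleGroup ((ℕ →₀ ℤ) ⧸ (factorialHom (Nat.count (α · = true))).ker) ↔
      {n | α n = true}.Infinite := by
  refine ⟨fun hdiv hfin => ?_, fun hinf => ?_⟩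
  · exact not_isDivisibleGroup_quotient_ker_factorialHom (Nat.count_le_card hfin) hdiv
  · refine isDivisibleGroup_quotient_ker_of_surjective isDivisibleGroup_rat
      (factorialHom_surjective fun m => ?_)
    obtain ⟨i, hi⟩ := Nat.surjective_count_of_infinite_setOfPred hinf m
    exact ⟨i, hi.ge⟩

theorem continuous_mem_ker_factorialHom_count :
    Continuous fun (α : ℕ → Bool) (x : ℕ →₀ ℤ) =>
      decide (x ∈ (factorialHom (Nat.count (α · = true))).ker) := by
  refine continuous_pi fun x => DependsOn.continuous (s := Set.Iio (x.support.sup id))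
    (fun α β h => ?_) (Set.finite_Iio _)
  simp only [AddMonoidHom.mem_ker]
  rw [factorialHom_congr fun i hi => (dependsOn_count i).mono ?_ h]
  exact Set.Iio_subset_Iio (Finset.le_sup (f := id) hi)

/-- (a) Divisibility is a `Gδ` class in the coding of countable abelian groups by
subgroups of `ℕ →₀ ℤ`; (b) it is `Π⁰₂`-hard: the canonical `Π⁰₂`-complete set of
binary sequences with infinitely many `true` values continuously reduces to it. -/
theorem divisible_quotient_pi02_complete :
    (IsGδ {χ : (ℕ →₀ ℤ) → Bool |
      ∃ H : AddSubgroup (ℕ →₀ ℤ),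
        (H : Set (ℕ →₀ ℤ)) = {x : ℕ →₀ ℤ | χ x = true} ∧
        IsDivisibleGroup ((ℕ →₀ ℤ) ⧸ H)}) ∧
    (∃ f : (ℕ → Bool) → ((ℕ →₀ ℤ) → Bool), Continuous f ∧
      ∀ α : ℕ → Bool, ∃ J : AddSubgroup (ℕ →₀ ℤ),
        (J : Set (ℕ →₀ ℤ)) = {x : ℕ →₀ ℤ | f α x = true} ∧
        (IsDivisibleGroup ((ℕ →₀ ℤ) ⧸ J) ↔ {n : ℕ | α n = true}.Infinite)) :=
  ⟨isGδ_setOf_isDivisibleGroup_quotient, _, continuous_mem_ker_factorialHom_count, fun α =>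
    ⟨_, by ext; simp, isDivisibleGroup_quotient_ker_factorialHom_count_iff α⟩⟩
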